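/- Let D ≥ 2. Then there exists a continuous vector field U : ℝ^D → ℝ^D that is not identically zero, vanishes outside a compact set, is differentiable at every point not lying on the boundary of the closed box [−1,1]^D, and satisfies div U(z) = 0 at every such point of differentiability. -/

import Mathlib

/-!
Take a smooth bump function `ψ` on `ℝ^D` and the field `U = ∂_{z₁}ψ e₀ - ∂_{z₀}ψ e₁` having `ψ` as
stream function in the `(z₀, z₁)`-plane. It is smooth with compact support, and
`div U = ∂_{z₀}∂_{z₁}ψ - ∂_{z₁}∂_{z₀}ψ = 0` by symmetry of second derivatives. It is not zero:
otherwise `ψ` would be constant along every line in direction `e₁`, hence zero by compact support.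
-/

open Filter

theorem HasCompactSupport.eq_zero_of_fderiv_apply_eq_zero {E F : Type*}
    [NormedAddCommGroup E] [NormedSpace ℝ E] [NormedAddCommGroup F] [NormedSpace ℝ F]
    {ψ : E → F} (hψ : Differentiable ℝ ψ) (hc : HasCompactSupport ψ) {v : E} (hv : v ≠ 0)
    (h : ∀ z, fderiv ℝ ψ z v = 0) : ψ = 0 := by
  funext z
  have hline : ∀ t : ℝ, HasDerivAt (fun t => ψ (z + t • v)) 0 t := fun t => by
    simpa [h, Function.comp_def] using (hψ (z + t • v)).hasFDerivAt.comp_hasDerivAt t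
      (((hasDerivAt_id t).smul_const v).const_add z)
  have hconst : (fun t : ℝ => ψ (z + t • v)) = fun _ => ψ z := funext fun t => by
    simpa using is_const_of_deriv_eq_zero (fun t => (hline t).differentiableAt)
      (fun t => (hline t).deriv) t 0
  have hto : Tendsto (fun t : ℝ => z + t • v) atTop (Bornology.cobounded E) := by
    refine (tendsto_const_add_cobounded z).comp (tendsto_norm_atTop_iff_cobounded.1 ?_)
    simp only [norm_smul, Real.norm_eq_abs]
    exact tendsto_abs_atTop_atTop.atTop_mul_const (norm_pos_iff.2 hv)
  have hlim := hc.is_zero_at_infty.comp (hto.mono_right Metric.cobounded_le_cocompact)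
  rw [Function.comp_def, hconst] at hlim
  exact tendsto_nhds_unique tendsto_const_nhds hlim

section

variable {ι : Type*} [DecidableEq ι]

noncomputable def divergence [Fintype ι] (U : (ι → ℝ) → ι → ℝ) (z : ι → ℝ) : ℝ :=
  ∑ i, fderiv ℝ U z (Pi.single i 1) i

noncomputable def streamField (ψ : (ι → ℝ) → ℝ) (i j : ι) (z : ι → ℝ) : ι → ℝ :=
  fderiv ℝ ψ z (Pi.single j 1) • Pi.single i 1 - fderiv ℝ ψ z (Pi.single i 1) • Pi.single j 1

variable {ψ : (ι → ℝ) → ℝ}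

theorem HasCompactSupport.streamField (i j : ι) (hψ : HasCompactSupport ψ) :
    HasCompactSupport (streamField ψ i j) :=
  (hψ.fderiv (𝕜 := ℝ)).mono <| Function.support_subset_iff'.2 fun z hz => by
    simp [_root_.streamField, Function.notMem_support.1 hz]

variable [Fintype ι]

theorem hasFDerivAt_streamField {z : ι → ℝ} (i j : ι)
    (hψ : DifferentiableAt ℝ (fderiv ℝ ψ) z) :
    HasFDerivAt (streamField ψ i j)
      (((fderiv ℝ (fderiv ℝ ψ) z).flip (Pi.single j 1)).smulRight (Pi.single i 1) -
        ((fderiv ℝ (fderiv ℝ ψ) z).flip (Pi.single i 1)).smulRight (Pi.single j 1)) z := by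
  have hdir : ∀ v : ι → ℝ, HasFDerivAt (fun y => fderiv ℝ ψ y v)
      ((fderiv ℝ (fderiv ℝ ψ) z).flip v) z := fun v => by
    simpa using hψ.hasFDerivAt.clm_apply (hasFDerivAt_const v z)
  exact ((hdir _).smul_const _).sub ((hdir _).smul_const _)

theorem divergence_streamField {z : ι → ℝ} (i j : ι) (hψ : ContDiffAt ℝ 2 ψ z) :
    divergence (streamField ψ i j) z = 0 := by
  have hsymm := hψ.isSymmSndFDerivAt (by simp)
  have hd : DifferentiableAt ℝ (fderiv ℝ ψ) z :=
    (hψ.fderiv_right (m := 1) le_rfl).differentiableAt one_ne_zero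
  simp [divergence, (hasFDerivAt_streamField i j hd).fderiv, Pi.single_apply,
    Finset.sum_sub_distrib, hsymm (Pi.single i 1) (Pi.single j 1)]

theorem streamField_ne_zero {i j : ι} (hij : i ≠ j) (hψ : Differentiable ℝ ψ)
    (hc : HasCompactSupport ψ) (hψ0 : ψ ≠ 0) : streamField ψ i j ≠ 0 := by
  refine fun h => hψ0 (hc.eq_zero_of_fderiv_apply_eq_zero hψ (v := Pi.single j 1) (by simp)
    fun z => ?_)
  simpa [streamField, hij] using congrFun (congrFun h z) i

end

/-- For `D ≥ 2` there exists a continuous, not identically zero, compactly supported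
vector field `U : ℝ^D → ℝ^D` which is differentiable off the boundary of the box
`[-1,1]^D` and divergence-free at every point of differentiability. -/
theorem stmt9 (D : ℕ) (hD : 2 ≤ D) :
    ∃ U : (Fin D → ℝ) → (Fin D → ℝ), Continuous U ∧ U ≠ 0 ∧
      (∃ K : Set (Fin D → ℝ), IsCompact K ∧ ∀ z ∉ K, U z = 0) ∧
      ∀ z ∉ frontier (Set.Icc (-1 : Fin D → ℝ) 1),
        DifferentiableAt ℝ U z ∧ ∑ i, fderiv ℝ U z (Pi.single i 1) i = 0 := by
  obtain ⟨ψ, -, hψc, hψ, -, hψ0⟩ :=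
    exists_contDiff_tsupport_subset (n := 2) (univ_mem (f := nhds (0 : Fin D → ℝ)))
  have hij : (⟨0, by omega⟩ : Fin D) ≠ ⟨1, by omega⟩ := by simp
  have hU : Differentiable ℝ (streamField ψ ⟨0, by omega⟩ ⟨1, by omega⟩) := fun z =>
    (hasFDerivAt_streamField _ _
      ((hψ.fderiv_right (m := 1) le_rfl).differentiable one_ne_zero z)).differentiableAt
  refine ⟨_, hU.continuous,
    streamField_ne_zero hij (hψ.differentiable two_ne_zero) hψc fun h => by simp [h] at hψ0,
    ⟨_, (hψc.streamField _ _).isCompact, fun z => image_eq_zero_of_notMem_tsupport⟩,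
    fun z _ => ⟨hU z, divergence_streamField _ _ hψ.contDiffAt⟩⟩
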